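/- arXiv:2211.12058 — 2 statements merged into one kernel-verified Lean document; each statement's English description precedes it below -/
import Mathlib

section
/- Let (M,d) be a metric space and μ a Borel probability measure on M such that every metric sphere has measure zero, i.e. μ({y ∈ M : d(p,y) = r}) = 0 for every p ∈ M and every r ≥ 0. Then for every a ≥ 0, the function b ↦ ∫_M μ(B̄_{max(a,b)}(x) \ B̄_{min(a,b)}(x)) dμ(x) tends to 0 as b → a, where B̄_r(x) denotes the closed ball of radius r about x. -/
open MeasureTheory Metric Filter
open scoped ENNReal Topology

/-- Dominated convergence step: if every metric sphere is `μ`-null, then for every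
`a ≥ 0` the averaged measure of the annulus between the closed balls of radii
`min a b` and `max a b` tends to `0` as `b → a`. -/
theorem tendsto_average_annulus_measure
    {M : Type*} [MetricSpace M] [MeasurableSpace M] [BorelSpace M]
    (μ : Measure M) [IsProbabilityMeasure μ]
    (hsphere : ∀ p : M, ∀ r : ℝ, 0 ≤ r → μ {y : M | dist p y = r} = 0)
    (a : ℝ) (ha : 0 ≤ a) :
    Tendsto
      (fun b : ℝ =>
        ∫⁻ x : M, μ (closedBall x (max a b) \ closedBall x (min a b)) ∂μ)
      (𝓝 a) (𝓝 0) := by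
  -- x ↦ μ (closedBall x r) is upper semicontinuous, hence measurable
  have husc : ∀ r : ℝ, UpperSemicontinuous (fun x : M => μ (closedBall x r)) := by
    intro r x c hc
    -- continuity from above along radii r + 1/(n+1)
    have hanti : Antitone (fun n : ℕ => closedBall x (r + 1 / (n + 1))) := by
      intro m n hmn
      apply closedBall_subset_closedBall
      have : (1 : ℝ) / (n + 1) ≤ 1 / (m + 1) := by
        apply one_div_le_one_div_of_le (by positivity)
        exact_mod_cast Nat.succ_le_succ hmn
      linarith
    have hiInter : ⋂ n : ℕ, closedBall x (r + 1 / (n + 1)) = closedBall x r := by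
      ext y
      simp only [Set.mem_iInter, mem_closedBall]
      constructor
      · intro h
        by_contra hcon
        push_neg at hcon
        obtain ⟨n, hn⟩ := exists_nat_one_div_lt (sub_pos.mpr hcon)
        exact absurd (h n) (by push_neg; linarith)
      · intro h n
        have : (0 : ℝ) < 1 / (n + 1) := by positivity
        linarith
    have htd : Tendsto (fun n : ℕ => μ (closedBall x (r + 1 / (n + 1)))) atTop
        (𝓝 (μ (closedBall x r))) := by
      have := tendsto_measure_iInter_atTop (μ := μ)
        (fun n => measurableSet_closedBall.nullMeasurableSet) hanti ⟨0, measure_ne_top μ _⟩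
      rwa [hiInter] at this
    obtain ⟨n, hn⟩ := (htd.eventually_lt_const hc).exists
    have hpos : (0 : ℝ) < 1 / (n + 1) := by positivity
    filter_upwards [ball_mem_nhds x hpos] with y hy
    calc μ (closedBall y r) ≤ μ (closedBall x (r + 1 / (n + 1))) := by
          apply measure_mono
          apply closedBall_subset_closedBall'
          rw [mem_ball] at hy
          linarith [dist_comm y x ▸ hy]
      _ < c := hn
  have hmeas : ∀ r s : ℝ, s ≤ r →
      Measurable (fun x : M => μ (closedBall x r \ closedBall x s)) := by
    intro r s hsr
    have heq : (fun x : M => μ (closedBall x r \ closedBall x s)) =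
        fun x : M => μ (closedBall x r) - μ (closedBall x s) := by
      funext x
      rw [measure_diff (closedBall_subset_closedBall hsr)
        measurableSet_closedBall.nullMeasurableSet (measure_ne_top μ _)]
    rw [heq]
    exact ((husc r).measurable).sub ((husc s).measurable)
  -- pointwise convergence
  have h_lim : ∀ x : M,
      Tendsto (fun b : ℝ => μ (closedBall x (max a b) \ closedBall x (min a b)))
        (𝓝 a) (𝓝 0) := by
    intro x
    have hsph : μ {y : M | dist x y = a} = 0 := hsphere x a ha
    set s : ℕ → Set M := fun n =>
      closedBall x (a + 1 / (n + 1)) \ closedBall x (a - 1 / (n + 1)) with hs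
    have hpos : ∀ n : ℕ, (0 : ℝ) < 1 / (n + 1) := fun n => by positivity
    have hanti : Antitone s := by
      intro m n hmn
      have h1 : (1 : ℝ) / (n + 1) ≤ 1 / (m + 1) := by
        apply one_div_le_one_div_of_le (by positivity)
        exact_mod_cast Nat.succ_le_succ hmn
      intro y hy
      refine ⟨closedBall_subset_closedBall (by linarith) hy.1, fun hc => hy.2 ?_⟩
      exact closedBall_subset_closedBall (by linarith) hc
    have hiInter : ⋂ n, s n = {y : M | dist x y = a} := by
      ext y
      simp only [Set.mem_iInter, hs, Set.mem_diff, mem_closedBall, Set.mem_setOf_eq,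
        not_le]
      constructor
      · intro h
        have h1 : dist y x ≤ a := by
          by_contra hc
          push_neg at hc
          obtain ⟨n, hn⟩ := exists_nat_one_div_lt (sub_pos.mpr hc)
          exact absurd ((h n).1) (by push_neg; linarith)
        have h2 : a ≤ dist y x := by
          by_contra hc
          push_neg at hc
          obtain ⟨n, hn⟩ := exists_nat_one_div_lt (sub_pos.mpr hc)
          exact absurd ((h n).2) (by push_neg; linarith)
        rw [dist_comm]; linarith
      · intro h n
        rw [dist_comm] at h
        constructor
        · linarith [hpos n]
        · linarith [hpos n]
    have hmeas' : ∀ n, MeasurableSet (s n) := fun n =>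
      measurableSet_closedBall.diff measurableSet_closedBall
    have htend : Tendsto (fun n => μ (s n)) atTop (𝓝 0) := by
      have := tendsto_measure_iInter_atTop (μ := μ) (fun n => (hmeas' n).nullMeasurableSet)
        hanti ⟨0, measure_ne_top μ _⟩
      rwa [hiInter, hsph] at this
    rw [ENNReal.tendsto_nhds_zero]
    intro ε hε
    rw [ENNReal.tendsto_nhds_zero] at htend
    obtain ⟨n, hn⟩ := (htend ε hε).exists
    have hball : ∀ᶠ b : ℝ in 𝓝 a, |b - a| < 1 / (n + 1) := by
      have : Metric.ball a (1 / (n + 1)) ∈ 𝓝 a := ball_mem_nhds a (hpos n)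
      filter_upwards [this] with b hb
      simpa [Real.dist_eq] using hb
    filter_upwards [hball] with b hb
    refine le_trans (measure_mono ?_) hn
    have habs := abs_lt.mp hb
    intro y hy
    refine ⟨closedBall_subset_closedBall ?_ hy.1, fun hc => hy.2 ?_⟩
    · rcases le_total a b with h | h
      · rw [max_eq_right h]; linarith
      · rw [max_eq_left h]; linarith
    · refine closedBall_subset_closedBall ?_ hc
      rcases le_total a b with h | h
      · rw [min_eq_left h]; linarith
      · rw [min_eq_right h]; linarith
  -- dominated convergence
  have key := tendsto_lintegral_filter_of_dominated_convergence (μ := μ)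
    (l := 𝓝 a) (F := fun b x => μ (closedBall x (max a b) \ closedBall x (min a b)))
    (f := fun _ => 0) (bound := fun _ => 1)
    (Eventually.of_forall fun b => hmeas _ _ (min_le_max))
    (Eventually.of_forall fun b => ae_of_all _ fun x =>
      le_trans (measure_mono Set.diff_subset |>.trans (measure_mono (Set.subset_univ _)))
        (by simp))
    (by simp)
    (ae_of_all _ fun x => h_lim x)
  simpa using key
end

section
/- Let (M,d) be a metric space, μ a Borel probability measure on M, and ε > 0. Suppose there are finitely many points x_1,…,x_k ∈ M with M = ⋃_{j=1}^k B_{ε/2}(x_j), and set m := min_{1 ≤ j ≤ k} μ(B_{ε/2}(x_j)). Then for every n, μⁿ({(X_1,…,X_n) ∈ M^n : ⋃_{i=1}^n B_ε(X_i) ≠ M}) ≤ k·(1−m)^n. -/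
open MeasureTheory Metric
open scoped ENNReal

/-- Exponential bound: if `M` is covered by `k` balls of radius `ε/2` centered at
`x 1, …, x k`, and `m` is the minimum of their measures, then the probability that
`n` i.i.d. samples fail to `ε`-cover `M` is at most `k·(1-m)^n`. -/
theorem measure_coverFail_le_exponential
    {M : Type*} [MetricSpace M] [MeasurableSpace M] [BorelSpace M]
    (μ : Measure M) [IsProbabilityMeasure μ]
    (ε : ℝ) (hε : 0 < ε)
    (k : ℕ) (x : Fin k → M)
    (hcov : (⋃ j : Fin k, ball (x j) (ε / 2)) = Set.univ)
    (n : ℕ) :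
    Measure.pi (fun _ : Fin n => μ)
      {X : Fin n → M | (⋃ i : Fin n, ball (X i) ε) ≠ Set.univ} ≤
    (k : ℝ≥0∞) * (1 - ⨅ j : Fin k, μ (ball (x j) (ε / 2))) ^ n := by
  set m := ⨅ j : Fin k, μ (ball (x j) (ε / 2)) with hm
  have hsub : {X : Fin n → M | (⋃ i : Fin n, ball (X i) ε) ≠ Set.univ} ⊆
      ⋃ j : Fin k, Set.univ.pi (fun _ : Fin n => (ball (x j) (ε / 2))ᶜ) := by
    intro X hX
    simp only [Set.mem_setOf_eq] at hX
    obtain ⟨y, hy⟩ := Set.ne_univ_iff_exists_notMem _ |>.mp hX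
    have : y ∈ ⋃ j : Fin k, ball (x j) (ε / 2) := hcov ▸ Set.mem_univ y
    obtain ⟨j, hj⟩ := Set.mem_iUnion.mp this
    refine Set.mem_iUnion.mpr ⟨j, fun i _ => ?_⟩
    intro hXi
    apply hy
    refine Set.mem_iUnion.mpr ⟨i, ?_⟩
    have : dist y (X i) ≤ dist y (x j) + dist (x j) (X i) := dist_triangle _ _ _
    rw [mem_ball] at hj hXi ⊢
    rw [dist_comm (x j) (X i)] at this
    linarith [hj, hXi]
  calc Measure.pi (fun _ : Fin n => μ)
        {X : Fin n → M | (⋃ i : Fin n, ball (X i) ε) ≠ Set.univ}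
      ≤ Measure.pi (fun _ : Fin n => μ)
          (⋃ j : Fin k, Set.univ.pi (fun _ : Fin n => (ball (x j) (ε / 2))ᶜ)) :=
        measure_mono hsub
    _ ≤ ∑ j : Fin k, Measure.pi (fun _ : Fin n => μ)
          (Set.univ.pi (fun _ : Fin n => (ball (x j) (ε / 2))ᶜ)) :=
        measure_iUnion_fintype_le _ _
    _ ≤ ∑ _j : Fin k, (1 - m) ^ n := by
        refine Finset.sum_le_sum fun j _ => ?_
        rw [Measure.pi_pi]
        have hc : μ ((ball (x j) (ε / 2))ᶜ) = 1 - μ (ball (x j) (ε / 2)) :=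
          prob_compl_eq_one_sub measurableSet_ball
        rw [Finset.prod_const, hc, Finset.card_univ, Fintype.card_fin]
        exact pow_le_pow_left' (tsub_le_tsub_left (iInf_le (fun j => μ (ball (x j) (ε / 2))) j) 1) n
    _ = (k : ℝ≥0∞) * (1 - m) ^ n := by
        rw [Finset.sum_const, Finset.card_univ, Fintype.card_fin, nsmul_eq_mul]
end
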